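/- arXiv:2604.01047 — 7 statements merged into one kernel-verified Lean document; each statement's English description precedes it below -/
import Mathlib

section
/- Let m > 0, let ς : ℝ → ℝ be measurable with ς(M) > 0 for all M ≥ 4m² and ς square-integrable on [4m², ∞), and let c ∈ ℝ with 1 < c < 4m². Then: (i) for every w ≥ 0 the function M ↦ ς(M)·(w + c)/(w + M) is integrable on [4m², ∞); (ii) the function F : [0, ∞) → ℝ defined by F(w) := ∫_{4m²}^∞ ς(M)·(w + c)/(w + M) dM satisfies F(w) > 0 for every w ≥ 0; and (iii) F is strictly monotonically increasing on [0, ∞). -/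
/-!
Since `M ↦ (w + M)⁻¹` is square-integrable on `[4m², ∞)`, Cauchy–Schwarz makes the integrand
integrable. It is positive there, and since `c < 4m² ≤ M` the factor `(w + c) / (w + M)` is
strictly increasing in `w`; strict positivity of the integral of a strictly positive function
over a set of positive measure gives both positivity and strict monotonicity.
-/

open MeasureTheory Set

section PositiveIntegrals

variable {X : Type*} [MeasurableSpace X] {μ : Measure X} {s : Set X} {f g : X → ℝ}

theorem setIntegral_pos_of_forall_pos (hs : MeasurableSet s) (hμs : μ s ≠ 0)
    (hf : IntegrableOn f s μ) (hpos : ∀ x ∈ s, 0 < f x) : 0 < ∫ x in s, f x ∂μ := by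
  have hnonneg : 0 ≤ᵐ[μ.restrict s] f :=
    (ae_restrict_mem hs).mono fun x hx => (hpos x hx).le
  rw [setIntegral_pos_iff_support_of_nonneg_ae hnonneg hf]
  have hsupport : Function.support f ∩ s = s :=
    inter_eq_right.2 fun x hx => (hpos x hx).ne'
  rw [hsupport]
  exact pos_iff_ne_zero.2 hμs

theorem setIntegral_lt_setIntegral_of_forall_lt (hs : MeasurableSet s) (hμs : μ s ≠ 0)
    (hf : IntegrableOn f s μ) (hg : IntegrableOn g s μ) (hlt : ∀ x ∈ s, f x < g x) :
    ∫ x in s, f x ∂μ < ∫ x in s, g x ∂μ := by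
  have hdiff : 0 < ∫ x in s, (g x - f x) ∂μ :=
    setIntegral_pos_of_forall_pos hs hμs (hg.sub hf) fun x hx => sub_pos.2 (hlt x hx)
  rw [integral_sub hg hf] at hdiff
  linarith

end PositiveIntegrals

theorem memLp_two_inv_Ici {a : ℝ} (ha : 0 < a) :
    MemLp (fun x : ℝ => x⁻¹) 2 (volume.restrict (Ici a)) := by
  rw [memLp_two_iff_integrable_sq measurable_inv.aestronglyMeasurable, ← IntegrableOn,
    integrableOn_Ici_iff_integrableOn_Ioi]
  refine (integrableOn_Ioi_rpow_of_lt (by norm_num : (-2 : ℝ) < -1) ha).congr_fun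
    (fun x hx => ?_) measurableSet_Ioi
  dsimp only
  have hx : 0 < x := ha.trans hx
  rw [Real.rpow_neg hx.le, Real.rpow_two, inv_pow]

theorem memLp_two_inv_add_Ici {a w : ℝ} (ha : 0 < a) (hw : 0 ≤ w) :
    MemLp (fun x : ℝ => (w + x)⁻¹) 2 (volume.restrict (Ici a)) := by
  refine (memLp_two_inv_Ici ha).of_le
    (measurable_const.add measurable_id).inv.aestronglyMeasurable ?_
  filter_upwards [ae_restrict_mem measurableSet_Ici] with x hx
  have hx : 0 < x := ha.trans_le hx
  rw [Real.norm_of_nonneg (by positivity), Real.norm_of_nonneg (by positivity)]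
  exact inv_anti₀ hx (by linarith)

theorem integrableOn_mul_div_add_Ici {f : ℝ → ℝ} {a w : ℝ}
    (hf : MemLp f 2 (volume.restrict (Ici a))) (ha : 0 < a) (hw : 0 ≤ w) (b : ℝ) :
    IntegrableOn (fun x => f x * b / (w + x)) (Ici a) := by
  have hprod : Integrable (f * fun x => (w + x)⁻¹) (volume.restrict (Ici a)) :=
    hf.integrable_mul (memLp_two_inv_add_Ici ha hw)
  refine (hprod.const_mul b).congr (ae_of_all _ fun x => ?_)
  simp only [Pi.mul_apply]
  ring

theorem add_div_add_lt_add_div_add {c x w₁ w₂ : ℝ} (hcx : c < x) (hw : w₁ < w₂)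
    (h₁ : 0 < w₁ + x) : (w₁ + c) / (w₁ + x) < (w₂ + c) / (w₂ + x) := by
  rw [div_lt_div_iff₀ h₁ (by linarith)]
  nlinarith

theorem stmt_0_general (m : ℝ) (ς : ℝ → ℝ)
    (hpos : ∀ M : ℝ, 4 * m ^ 2 ≤ M → 0 < ς M)
    (hL2 : MemLp ς 2 (volume.restrict (Set.Ici (4 * m ^ 2))))
    (c : ℝ) (hc1 : 1 < c) (hc2 : c < 4 * m ^ 2) :
    (∀ w : ℝ, 0 ≤ w →
      IntegrableOn (fun M : ℝ => ς M * (w + c) / (w + M)) (Set.Ici (4 * m ^ 2))) ∧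
    (∀ w : ℝ, 0 ≤ w →
      0 < ∫ M in Set.Ici (4 * m ^ 2), ς M * (w + c) / (w + M)) ∧
    StrictMonoOn (fun w : ℝ => ∫ M in Set.Ici (4 * m ^ 2), ς M * (w + c) / (w + M))
      (Set.Ici (0 : ℝ)) := by
  have hc : 0 < c := one_pos.trans hc1
  have ha : 0 < 4 * m ^ 2 := hc.trans hc2
  have hint : ∀ w : ℝ, 0 ≤ w →
      IntegrableOn (fun M : ℝ => ς M * (w + c) / (w + M)) (Ici (4 * m ^ 2)) :=
    fun w hw => integrableOn_mul_div_add_Ici hL2 ha hw (w + c)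
  have hvol : volume (Ici (4 * m ^ 2)) ≠ 0 := by simp
  refine ⟨hint, fun w hw => ?_, fun w₁ hw₁ w₂ hw₂ hlt => ?_⟩
  · refine setIntegral_pos_of_forall_pos measurableSet_Ici hvol (hint w hw) fun M hM => ?_
    have hςM := hpos M hM
    have hwM : 0 < w + M := by linarith [mem_Ici.1 hM]
    have hwc : 0 < w + c := by linarith
    positivity
  · refine setIntegral_lt_setIntegral_of_forall_lt measurableSet_Ici hvol (hint w₁ hw₁)
      (hint w₂ hw₂) fun M hM => ?_
    have hw₁M : 0 < w₁ + M := by linarith [mem_Ici.1 hM, mem_Ici.1 hw₁]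
    simp only [mul_div_assoc]
    exact mul_lt_mul_of_pos_left
      (add_div_add_lt_add_div_add (hc2.trans_le hM) hlt hw₁M) (hpos M hM)

theorem stmt_0 (m : ℝ) (hm : 0 < m) (ς : ℝ → ℝ) (hmeas : Measurable ς)
    (hpos : ∀ M : ℝ, 4 * m ^ 2 ≤ M → 0 < ς M)
    (hL2 : MemLp ς 2 (volume.restrict (Set.Ici (4 * m ^ 2))))
    (c : ℝ) (hc1 : 1 < c) (hc2 : c < 4 * m ^ 2) :
    (∀ w : ℝ, 0 ≤ w →
      IntegrableOn (fun M : ℝ => ς M * (w + c) / (w + M)) (Set.Ici (4 * m ^ 2))) ∧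
    (∀ w : ℝ, 0 ≤ w →
      0 < ∫ M in Set.Ici (4 * m ^ 2), ς M * (w + c) / (w + M)) ∧
    StrictMonoOn (fun w : ℝ => ∫ M in Set.Ici (4 * m ^ 2), ς M * (w + c) / (w + M))
      (Set.Ici (0 : ℝ)) :=
  stmt_0_general m ς hpos hL2 c hc1 hc2
end

section
/- Let m > 0. For every real z with 0 < z < 4m², the function M ↦ ρ(M)/(M − z) is integrable on [4m², ∞) and ∫_{4m²}^∞ ρ(M)/(M − z) dM = (1/(8π²))·( 1/z − √(4m² − z)·arcsin(√z/(2m)) / z^{3/2} ). -/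
open MeasureTheory Set Real

/-- The spectral density `ρ(M) = (1/(16π²M))·√(1 − 4m²/M)` for `M ≥ 4m²`, and `0` otherwise. -/
noncomputable def rho (m M : ℝ) : ℝ :=
  if 4 * m ^ 2 ≤ M then (1 / (16 * Real.pi ^ 2 * M)) * Real.sqrt (1 - 4 * m ^ 2 / M) else 0

/-!
With `a = 4m²`, `s = √(1 - a/M)` and `k = √(z/(a - z))`, a primitive of `ρ(M)/(M - z)` is
`(s - arctan (k s)/k) / (8π² z)`. It vanishes at `M = a` (where `s = 0`) and tends to
`(1 - arctan k / k) / (8π² z)` as `M → ∞` (where `s → 1`). Since the integrand is nonnegative,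
the improper fundamental theorem of calculus gives integrability and the value, and
`arctan k = arcsin (√z/√a)` turns it into the stated closed form.
-/

theorem integrableOn_Ici_and_integral_eq_of_hasDerivAt_of_nonneg {g g' : ℝ → ℝ} {a l : ℝ}
    (hcont : ContinuousWithinAt g (Ici a) a) (hderiv : ∀ x ∈ Ioi a, HasDerivAt g (g' x) x)
    (hnonneg : ∀ x ∈ Ioi a, 0 ≤ g' x) (hg : Filter.Tendsto g Filter.atTop (nhds l)) :
    IntegrableOn g' (Ici a) ∧ ∫ x in Ici a, g' x = l - g a :=
  ⟨(integrableOn_Ici_iff_integrableOn_Ioi).2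
      (integrableOn_Ioi_deriv_of_nonneg hcont hderiv hnonneg hg),
    by rw [integral_Ici_eq_integral_Ioi,
      integral_Ioi_of_hasDerivAt_of_nonneg hcont hderiv hnonneg hg]⟩

theorem hasDerivAt_sub_arctan_mul_div {k : ℝ} (hk : k ≠ 0) (s : ℝ) :
    HasDerivAt (fun s => s - arctan (k * s) / k) ((k * s) ^ 2 / (1 + (k * s) ^ 2)) s := by
  have h := (hasDerivAt_id s).sub ((((hasDerivAt_id s).const_mul k).arctan).div_const k)
  refine h.congr_deriv ?_
  simp only [id]
  field_simp
  ring

theorem hasDerivAt_sqrt_one_sub_div {a x : ℝ} (ha : 0 < a) (hax : a < x) :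
    HasDerivAt (fun x => √(1 - a / x)) (a / x ^ 2 / (2 * √(1 - a / x))) x := by
  have hx : x ≠ 0 := (ha.trans hax).ne'
  have hpos : 0 < 1 - a / x := sub_pos.2 ((div_lt_one (ha.trans hax)).2 hax)
  refine HasDerivAt.sqrt ?_ hpos.ne'
  exact (((hasDerivAt_inv hx).const_mul a).const_sub 1).congr_deriv (by field_simp)

theorem tendsto_sqrt_one_sub_div_atTop (a : ℝ) :
    Filter.Tendsto (fun x => √(1 - a / x)) Filter.atTop (nhds 1) := by
  have h := ((tendsto_const_nhds (x := a)).div_atTop Filter.tendsto_id).const_sub 1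
  rw [sub_zero] at h
  simpa using h.sqrt

noncomputable def spectralPrimitive (a z x : ℝ) : ℝ :=
  (√(1 - a / x) - arctan (√(z / (a - z)) * √(1 - a / x)) / √(z / (a - z))) / (8 * π ^ 2 * z)

section spectralPrimitive

variable {a z : ℝ}

theorem spectralPrimitive_self (ha : a ≠ 0) : spectralPrimitive a z a = 0 := by
  simp [spectralPrimitive, ha]

theorem continuousAt_spectralPrimitive (ha : a ≠ 0) :
    ContinuousAt (spectralPrimitive a z) a := by
  have hs : ContinuousAt (fun x => √(1 - a / x)) a :=
    (continuousAt_const.sub (continuousAt_const.div continuousAt_id ha)).sqrt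
  unfold spectralPrimitive
  fun_prop

theorem tendsto_spectralPrimitive_atTop :
    Filter.Tendsto (spectralPrimitive a z) Filter.atTop
      (nhds ((1 - arctan √(z / (a - z)) / √(z / (a - z))) / (8 * π ^ 2 * z))) := by
  have hs := tendsto_sqrt_one_sub_div_atTop a
  have harctan := (continuous_arctan.tendsto _).comp (hs.const_mul √(z / (a - z)))
  rw [mul_one] at harctan
  exact (hs.sub (harctan.div_const _)).div_const _

theorem hasDerivAt_spectralPrimitive (hz : 0 < z) (hza : z < a) {x : ℝ} (hax : a < x) :
    HasDerivAt (spectralPrimitive a z) (√(1 - a / x) / (16 * π ^ 2 * x * (x - z))) x := by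
  have ha : 0 < a := hz.trans hza
  have hx : 0 < x := ha.trans hax
  have hax' : 0 < 1 - a / x := sub_pos.2 ((div_lt_one hx).2 hax)
  have hk : 0 < z / (a - z) := div_pos hz (sub_pos.2 hza)
  have h := ((hasDerivAt_sub_arctan_mul_div (sqrt_pos.2 hk).ne' _).comp x
    (hasDerivAt_sqrt_one_sub_div ha hax)).div_const (8 * π ^ 2 * z)
  refine h.congr_deriv ?_
  have hs : x * √(1 - a / x) ^ 2 = x - a := by rw [sq_sqrt hax'.le]; field_simp
  have hden : a - z + z * √(1 - a / x) ^ 2 ≠ 0 := by nlinarith [sq_nonneg √(1 - a / x)]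
  have hs0 : √(1 - a / x) ≠ 0 := (sqrt_pos.2 hax').ne'
  have hxz : x - z ≠ 0 := by linarith
  have haz : a - z ≠ 0 := by linarith
  rw [mul_pow, sq_sqrt hk.le]
  generalize √(1 - a / x) = s at hs hden hs0 ⊢
  field_simp
  linear_combination (-16 * z) * hs

end spectralPrimitive

theorem arctan_sqrt_div_sub {a z : ℝ} (hz : 0 < z) (hza : z < a) :
    arctan √(z / (a - z)) = arcsin (√z / √a) := by
  have haz : 0 < a - z := sub_pos.2 hza
  rw [arctan_eq_arcsin, sq_sqrt (div_pos hz haz).le,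
    show 1 + z / (a - z) = a / (a - z) by field_simp; ring,
    sqrt_div hz.le, sqrt_div (hz.trans hza).le]
  have : √(a - z) ≠ 0 := (sqrt_pos.2 haz).ne'
  field_simp

theorem rho_nonneg (m M : ℝ) : 0 ≤ rho m M := by
  unfold rho
  split_ifs with hM
  · have : 0 ≤ M := (by positivity : 0 ≤ 4 * m ^ 2).trans hM
    positivity
  · rfl

theorem rho_div_sub_eq {m z M : ℝ} (hM : 4 * m ^ 2 ≤ M) :
    rho m M / (M - z) = √(1 - 4 * m ^ 2 / M) / (16 * π ^ 2 * M * (M - z)) := by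
  rw [rho, if_pos hM, one_div_mul_eq_div, div_div]

theorem stmt_2 (m : ℝ) (hm : 0 < m) (z : ℝ) (hz0 : 0 < z) (hz : z < 4 * m ^ 2) :
    IntegrableOn (fun M : ℝ => rho m M / (M - z)) (Set.Ici (4 * m ^ 2)) ∧
    ∫ M in Set.Ici (4 * m ^ 2), rho m M / (M - z) =
      (1 / (8 * Real.pi ^ 2)) *
        (1 / z -
          Real.sqrt (4 * m ^ 2 - z) * Real.arcsin (Real.sqrt z / (2 * m)) /
            z ^ ((3 : ℝ) / 2)) := by
  have ha : 0 < 4 * m ^ 2 := hz0.trans hz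
  obtain ⟨hint, hval⟩ := integrableOn_Ici_and_integral_eq_of_hasDerivAt_of_nonneg
    (continuousAt_spectralPrimitive ha.ne').continuousWithinAt
    (fun x hx => (hasDerivAt_spectralPrimitive hz0 hz hx).congr_deriv
      (rho_div_sub_eq hx.out.le).symm)
    (fun x hx => div_nonneg (rho_nonneg m x) (sub_nonneg.2 (hz.trans hx.out).le))
    tendsto_spectralPrimitive_atTop
  refine ⟨hint, hval.trans ?_⟩
  have h2m : √(4 * m ^ 2) = 2 * m := by
    rw [show 4 * m ^ 2 = (2 * m) ^ 2 by ring, sqrt_sq (by positivity)]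
  have hz32 : z ^ ((3 : ℝ) / 2) = z * √z := by
    rw [show (3 : ℝ) / 2 = 1 + 1 / 2 by norm_num, rpow_add hz0, rpow_one, ← sqrt_eq_rpow]
  rw [spectralPrimitive_self ha.ne', sub_zero, arctan_sqrt_div_sub hz0 hz, h2m, hz32,
    sqrt_div hz0.le]
  have : √z ≠ 0 := (sqrt_pos.2 hz0).ne'
  field_simp
end

section
/- Let m > 0. For every real w > 0, the function M ↦ ρ(M)/(w² + M) is integrable on [4m², ∞) and ∫_{4m²}^∞ ρ(M)/(w² + M) dM = (1/(16π²))·( (2m/w³)·√(4 + w²/m²)·log( w/(2m) + √(1 + w²/(4m²)) ) − 2/w² ). -/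
/-!
The substitution `M = 4m² / (1 - u²)` maps `(0, 1)` onto `(4m², ∞)` and turns `√(1 - 4m²/M)` into `u`,
so the integral becomes the rational integral `(1/8π²) ∫₀¹ u² / (s² - w²u²) du` with
`s² = w² + 4m²`, whose primitive is `(s / 2w³) log ((s + wu)/(s - wu)) - u / w²`.
Since `(s + w)(s - w) = 4m²`, the logarithm equals `2 log ((w + s)/(2m))`, which is the closed form.
-/

open MeasureTheory Set Real

section Substitution

variable {E : Type*} [NormedAddCommGroup E] [NormedSpace ℝ E] {a : ℝ}

lemma image_div_one_sub_sq_Ioo (ha : 0 < a) :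
    (fun u : ℝ => a / (1 - u ^ 2)) '' Ioo 0 1 = Ioi a := by
  ext M
  simp only [mem_image, mem_Ioo, mem_Ioi]
  constructor
  · rintro ⟨u, ⟨hu0, hu1⟩, rfl⟩
    rw [lt_div_iff₀ (by nlinarith)]
    nlinarith [mul_pos ha (mul_pos hu0 hu0)]
  · intro hM
    have hM0 : 0 < M := ha.trans hM
    have hlt : a / M < 1 := (div_lt_one hM0).mpr hM
    have hpos : 0 < a / M := div_pos ha hM0
    refine ⟨√(1 - a / M), ⟨sqrt_pos.mpr (by linarith), ?_⟩, ?_⟩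
    · rw [sqrt_lt' one_pos]
      linarith
    · rw [sq_sqrt (by linarith), sub_sub_cancel]
      field_simp

lemma injOn_div_one_sub_sq (ha : a ≠ 0) :
    InjOn (fun u : ℝ => a / (1 - u ^ 2)) (Ioo 0 1) := by
  intro u hu v hv h
  have hu2 : 1 - u ^ 2 ≠ 0 := by nlinarith [hu.1, hu.2]
  have hv2 : 1 - v ^ 2 ≠ 0 := by nlinarith [hv.1, hv.2]
  rw [div_eq_div_iff hu2 hv2, mul_right_inj' ha] at h
  nlinarith [hu.1, hv.1]

lemma hasDerivAt_div_one_sub_sq (a : ℝ) {u : ℝ} (hu : 1 - u ^ 2 ≠ 0) :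
    HasDerivAt (fun u : ℝ => a / (1 - u ^ 2)) (2 * a * u / (1 - u ^ 2) ^ 2) u := by
  refine ((hasDerivAt_const u a).div ((hasDerivAt_pow 2 u).const_sub 1) hu).congr_deriv ?_
  ring

lemma hasDerivWithinAt_div_one_sub_sq_Ioo (a : ℝ) :
    ∀ u ∈ Ioo (0 : ℝ) 1, HasDerivWithinAt (fun u : ℝ => a / (1 - u ^ 2))
      (2 * a * u / (1 - u ^ 2) ^ 2) (Ioo 0 1) u := fun u hu =>
  (hasDerivAt_div_one_sub_sq a (by nlinarith [hu.1, hu.2])).hasDerivWithinAt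

lemma eqOn_abs_deriv_div_one_sub_sq_smul (ha : 0 < a) (g : ℝ → E) :
    EqOn (fun u : ℝ => |2 * a * u / (1 - u ^ 2) ^ 2| • g (a / (1 - u ^ 2)))
      (fun u : ℝ => (2 * a * u / (1 - u ^ 2) ^ 2) • g (a / (1 - u ^ 2))) (Ioo 0 1) := by
  intro u hu
  dsimp only
  rw [abs_of_nonneg (by have := hu.1; positivity)]

lemma integrableOn_Ioi_iff_integrableOn_Ioo_div_one_sub_sq (ha : 0 < a) (g : ℝ → E) :
    IntegrableOn g (Ioi a) ↔
      IntegrableOn (fun u : ℝ => (2 * a * u / (1 - u ^ 2) ^ 2) • g (a / (1 - u ^ 2)))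
        (Ioo 0 1) := by
  rw [← image_div_one_sub_sq_Ioo ha, integrableOn_image_iff_integrableOn_abs_deriv_smul
    measurableSet_Ioo (hasDerivWithinAt_div_one_sub_sq_Ioo a) (injOn_div_one_sub_sq ha.ne')]
  exact integrableOn_congr_fun (eqOn_abs_deriv_div_one_sub_sq_smul ha g) measurableSet_Ioo

lemma integral_Ioi_eq_integral_Ioo_div_one_sub_sq (ha : 0 < a) (g : ℝ → E) :
    ∫ M in Ioi a, g M =
      ∫ u in Ioo 0 1, (2 * a * u / (1 - u ^ 2) ^ 2) • g (a / (1 - u ^ 2)) := by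
  rw [← image_div_one_sub_sq_Ioo ha, integral_image_eq_integral_abs_deriv_smul
    measurableSet_Ioo (hasDerivWithinAt_div_one_sub_sq_Ioo a) (injOn_div_one_sub_sq ha.ne')]
  exact setIntegral_congr_fun measurableSet_Ioo (eqOn_abs_deriv_div_one_sub_sq_smul ha g)

end Substitution

section Rational

variable {b c : ℝ}

lemma continuousOn_sq_div_sq_sub_sq (hbc : b ^ 2 < c ^ 2) :
    ContinuousOn (fun u : ℝ => u ^ 2 / (c ^ 2 - b ^ 2 * u ^ 2)) (Icc 0 1) := by
  refine (continuous_pow 2).continuousOn.div (by fun_prop) fun u hu => ?_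
  have : u ^ 2 ≤ 1 := by nlinarith [hu.1, hu.2]
  nlinarith [mul_le_mul_of_nonneg_left this (sq_nonneg b)]

lemma integral_sq_div_sq_sub_sq (hb : 0 < b) (hbc : b < c) :
    ∫ u in (0 : ℝ)..1, u ^ 2 / (c ^ 2 - b ^ 2 * u ^ 2) =
      (c * log ((c + b) / (c - b)) - 2 * b) / (2 * b ^ 3) := by
  have hderiv : ∀ u ∈ uIcc (0 : ℝ) 1,
      HasDerivAt (fun u => c / (2 * b ^ 3) * (log (c + b * u) - log (c - b * u)) - u / b ^ 2)
        (u ^ 2 / (c ^ 2 - b ^ 2 * u ^ 2)) u := by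
    intro u hu
    rw [uIcc_of_le zero_le_one] at hu
    have hbu : b * u ≤ b := by nlinarith [hu.2]
    have hplus : 0 < c + b * u := by nlinarith [hu.1]
    have hminus : 0 < c - b * u := by linarith
    have hlog_plus := (((hasDerivAt_id u).const_mul b).const_add c).log hplus.ne'
    have hlog_minus := (((hasDerivAt_id u).const_mul b).const_sub c).log hminus.ne'
    refine (((hlog_plus.sub hlog_minus).const_mul (c / (2 * b ^ 3))).sub
      ((hasDerivAt_id u).div_const (b ^ 2))).congr_deriv ?_
    rw [show c ^ 2 - b ^ 2 * u ^ 2 = (c + b * u) * (c - b * u) by ring]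
    simp only [id]
    field_simp
    ring
  have hcont := continuousOn_sq_div_sq_sub_sq (pow_lt_pow_left₀ hbc hb.le two_ne_zero)
  rw [intervalIntegral.integral_eq_sub_of_hasDerivAt hderiv
    (hcont.intervalIntegrable_of_Icc zero_le_one), log_div (by linarith) (by linarith)]
  simp only [mul_zero, mul_one, add_zero, sub_zero, sub_self, zero_div]
  field_simp

end Rational

lemma log_add_div_sub_eq_two_mul_log {r s w : ℝ} (hr : r ≠ 0) (hs : s ^ 2 = w ^ 2 + r ^ 2) :
    log ((s + w) / (s - w)) = 2 * log ((w + s) / r) := by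
  have hsw : (s - w) * (s + w) = r ^ 2 := by linear_combination hs
  have hsw_ne : (s - w) * (s + w) ≠ 0 := hsw ▸ pow_ne_zero 2 hr
  have hsq : (s + w) / (s - w) = ((w + s) / r) ^ 2 := by
    rw [div_pow, ← hsw, add_comm w, sq, mul_div_mul_right _ _ (right_ne_zero_of_mul hsw_ne)]
  rw [hsq, log_pow]
  push_cast
  ring

lemma eqOn_smul_rho_div_add_comp_div_one_sub_sq {m s : ℝ} (hm : m ≠ 0) (w : ℝ)
    (hs : s ^ 2 = w ^ 2 + 4 * m ^ 2) :
    EqOn (fun u : ℝ => (2 * (4 * m ^ 2) * u / (1 - u ^ 2) ^ 2) •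
        (rho m (4 * m ^ 2 / (1 - u ^ 2)) / (w ^ 2 + 4 * m ^ 2 / (1 - u ^ 2))))
      (fun u : ℝ => 1 / (8 * π ^ 2) * (u ^ 2 / (s ^ 2 - w ^ 2 * u ^ 2))) (Ioo 0 1) := by
  rintro u ⟨hu0, hu1⟩
  have hu2 : 0 < 1 - u ^ 2 := by nlinarith
  have hmem : 4 * m ^ 2 ≤ 4 * m ^ 2 / (1 - u ^ 2) :=
    le_div_self (by positivity) hu2 (by nlinarith)
  have hsqrt : √(1 - 4 * m ^ 2 / (4 * m ^ 2 / (1 - u ^ 2))) = u := by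
    rw [div_div_cancel₀ (by positivity), sub_sub_cancel, sqrt_sq hu0.le]
  have hden : s ^ 2 - w ^ 2 * u ^ 2 ≠ 0 := by
    nlinarith [mul_nonneg hu2.le (sq_nonneg w), sq_pos_of_ne_zero hm]
  simp only [rho, if_pos hmem, hsqrt, smul_eq_mul]
  field_simp
  rw [show (1 - u ^ 2) * w ^ 2 + 4 * m ^ 2 = s ^ 2 - w ^ 2 * u ^ 2 by linear_combination -hs]
  field_simp
  norm_num

lemma integrableOn_rho_div_add_Ioi {m : ℝ} (hm : m ≠ 0) (w : ℝ) :
    IntegrableOn (fun M : ℝ => rho m M / (w ^ 2 + M)) (Ioi (4 * m ^ 2)) := by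
  have hs : √(w ^ 2 + 4 * m ^ 2) ^ 2 = w ^ 2 + 4 * m ^ 2 := sq_sqrt (by positivity)
  rw [integrableOn_Ioi_iff_integrableOn_Ioo_div_one_sub_sq (by positivity),
    integrableOn_congr_fun (eqOn_smul_rho_div_add_comp_div_one_sub_sq hm w hs) measurableSet_Ioo]
  have hws : w ^ 2 < √(w ^ 2 + 4 * m ^ 2) ^ 2 := by
    rw [hs]
    exact lt_add_of_pos_right _ (by positivity)
  exact ((continuousOn_sq_div_sq_sub_sq hws).integrableOn_Icc.mono_set
    Ioo_subset_Icc_self).const_mul _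

lemma integral_rho_div_add_Ioi {m s w : ℝ} (hm : m ≠ 0) (hw : 0 < w) (hs0 : 0 ≤ s)
    (hs : s ^ 2 = w ^ 2 + 4 * m ^ 2) :
    ∫ M in Ioi (4 * m ^ 2), rho m M / (w ^ 2 + M) =
      (s * log ((s + w) / (s - w)) - 2 * w) / (16 * π ^ 2 * w ^ 3) := by
  have hws : w < s := by nlinarith [sq_pos_of_ne_zero hm]
  rw [integral_Ioi_eq_integral_Ioo_div_one_sub_sq (by positivity),
    setIntegral_congr_fun measurableSet_Ioo (eqOn_smul_rho_div_add_comp_div_one_sub_sq hm w hs),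
    integral_const_mul, ← integral_Ioc_eq_integral_Ioo,
    ← intervalIntegral.integral_of_le zero_le_one, integral_sq_div_sq_sub_sq hw hws]
  field_simp
  ring

theorem stmt_3 (m : ℝ) (hm : 0 < m) (w : ℝ) (hw : 0 < w) :
    IntegrableOn (fun M : ℝ => rho m M / (w ^ 2 + M)) (Set.Ici (4 * m ^ 2)) ∧
    ∫ M in Set.Ici (4 * m ^ 2), rho m M / (w ^ 2 + M) =
      (1 / (16 * Real.pi ^ 2)) *
        ((2 * m / w ^ 3) * Real.sqrt (4 + w ^ 2 / m ^ 2) *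
            Real.log (w / (2 * m) + Real.sqrt (1 + w ^ 2 / (4 * m ^ 2))) -
          2 / w ^ 2) := by
  obtain ⟨s, hs0, hs⟩ : ∃ s, 0 < s ∧ s ^ 2 = w ^ 2 + 4 * m ^ 2 :=
    ⟨√(w ^ 2 + 4 * m ^ 2), by positivity, sq_sqrt (by positivity)⟩
  have hsqrt_four : √(4 + w ^ 2 / m ^ 2) = s / m := by
    rw [sqrt_eq_iff_mul_self_eq_of_pos (by positivity)]
    field_simp
    linear_combination hs
  have hsqrt_one : √(1 + w ^ 2 / (4 * m ^ 2)) = s / (2 * m) := by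
    rw [sqrt_eq_iff_mul_self_eq_of_pos (by positivity)]
    field_simp
    linear_combination 4 * hs
  constructor
  · rw [integrableOn_Ici_iff_integrableOn_Ioi]
    exact integrableOn_rho_div_add_Ioi hm.ne' w
  · rw [integral_Ici_eq_integral_Ioi, integral_rho_div_add_Ioi hm.ne' hw hs0.le hs,
      log_add_div_sub_eq_two_mul_log (r := 2 * m) (by positivity) (by linear_combination hs),
      hsqrt_four, hsqrt_one, ← add_div]
    field_simp
end

section
/- Let m > 0 and let a₁, a₂, b₀, b₁, b₂ ∈ ℝ. Suppose that the set of solutions in D of the equation γ·(a₁ − γ)·(a₂ − γ)·J(γ) = b₀ + b₁·γ + b₂·γ² consists of exactly three pairwise distinct elements γ₀, γ₁, γ₂ ∈ D. Then the numbers β₀ := −γ₀·γ₁·γ₂, β₁ := γ₀·γ₁ + γ₀·γ₂ + γ₁·γ₂ and β₂ := −γ₀ − γ₁ − γ₂ are real (i.e. have vanishing imaginary part), and the polynomial P(M) = M³ + β₂·M² + β₁·M + β₀ has no zeros in the real interval [4m², ∞). -/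
open MeasureTheory Set Real

/-- The domain `D = ℂ ∖ [4m², ∞)`, i.e. the complement of the real ray `[4m², ∞)`. -/
def Dset (m : ℝ) : Set ℂ := {z : ℂ | ¬(z.im = 0 ∧ 4 * m ^ 2 ≤ z.re)}

/-- The complex Stieltjes transform `J(z) = ∫_{4m²}^∞ ρ(M)/(M − z) dM`. -/
noncomputable def Jc (m : ℝ) (z : ℂ) : ℂ :=
  ∫ M in Set.Ici (4 * m ^ 2), (rho m M : ℂ) / ((M : ℂ) - z)

/-! Since `ρ` is real, `J (conj z) = conj (J z)`, and the equation has real coefficients, so complex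
conjugation maps its solution set `{γ₀, γ₁, γ₂}` injectively into itself, i.e. permutes it. The
elementary symmetric functions of the `γᵢ` are therefore fixed by conjugation, hence real. The cubic
is `(M - γ₀)(M - γ₁)(M - γ₂)`, and no `γᵢ ∈ D` lies on the ray `[4m², ∞)`. -/

open ComplexConjugate

theorem RingHom.map_multiset_esymm {R S : Type*} [CommSemiring R] [CommSemiring S] (φ : R →+* S)
    (s : Multiset R) (n : ℕ) : φ (s.esymm n) = (s.map φ).esymm n := by
  simp only [Multiset.esymm, map_multiset_sum, Multiset.map_map, Multiset.powersetCard_map,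
    Function.comp_def, map_multiset_prod]

theorem RingHom.map_esymm_val_of_mapsTo {R : Type*} [CommSemiring R] (φ : R →+* R)
    (hφ : Function.Injective φ) {s : Finset R} (hs : Set.MapsTo φ s s) (n : ℕ) :
    φ (s.val.esymm n) = s.val.esymm n := by
  have hmap : s.map ⟨φ, hφ⟩ = s :=
    Finset.map_eq_of_subset fun _ hy ↦ by
      obtain ⟨x, hx, rfl⟩ := Finset.mem_map.mp hy
      exact hs hx
  rw [φ.map_multiset_esymm]
  simpa using congrArg (fun t : Finset R ↦ t.val.esymm n) hmap

namespace Multiset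

variable {R : Type*} [CommSemiring R]

lemma esymm_triple_one (x y z : R) : esymm (x ::ₘ y ::ₘ {z}) 1 = x + y + z := by
  simp [esymm, powersetCard_one, add_comm, add_left_comm]

lemma esymm_triple_two (x y z : R) :
    esymm (x ::ₘ y ::ₘ {z}) 2 = x * y + x * z + y * z := by
  simp [esymm, powersetCard_one, add_comm, add_assoc]

lemma esymm_triple_three (x y z : R) : esymm (x ::ₘ y ::ₘ {z}) 3 = x * y * z := by
  simp [esymm, powersetCard_one, mul_assoc]

end Multiset

lemma Jc_conj (m : ℝ) (z : ℂ) : Jc m (conj z) = conj (Jc m z) := by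
  rw [Jc, Jc, ← integral_conj]
  simp [map_div₀]

lemma conj_mem_Dset {m : ℝ} {z : ℂ} (hz : z ∈ Dset m) : conj z ∈ Dset m := by
  simpa [Dset] using hz

lemma ofReal_sub_ne_zero_of_mem_Dset {m M : ℝ} (hM : 4 * m ^ 2 ≤ M) {z : ℂ} (hz : z ∈ Dset m) :
    (M : ℂ) - z ≠ 0 := by
  rintro h
  rw [← sub_eq_zero.mp h] at hz
  exact hz ⟨Complex.ofReal_im M, hM⟩

lemma mapsTo_conj_solutions (m a₁ a₂ b₀ b₁ b₂ : ℝ) :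
    Set.MapsTo conj
      {γ : ℂ | γ ∈ Dset m ∧ γ * (a₁ - γ) * (a₂ - γ) * Jc m γ = b₀ + b₁ * γ + b₂ * γ ^ 2}
      {γ : ℂ | γ ∈ Dset m ∧ γ * (a₁ - γ) * (a₂ - γ) * Jc m γ = b₀ + b₁ * γ + b₂ * γ ^ 2} :=
  fun γ ⟨hD, heq⟩ ↦ ⟨conj_mem_Dset hD, by simpa [Jc_conj] using congrArg conj heq⟩

theorem stmt_8_general (m : ℝ) (a₁ a₂ b₀ b₁ b₂ : ℝ) (γ₀ γ₁ γ₂ : ℂ)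
    (hγ₀ : γ₀ ∈ Dset m) (hγ₁ : γ₁ ∈ Dset m) (hγ₂ : γ₂ ∈ Dset m)
    (hne₀₁ : γ₀ ≠ γ₁) (hne₀₂ : γ₀ ≠ γ₂) (hne₁₂ : γ₁ ≠ γ₂)
    (hsol : {γ : ℂ | γ ∈ Dset m ∧
        γ * ((a₁ : ℂ) - γ) * ((a₂ : ℂ) - γ) * Jc m γ =
          (b₀ : ℂ) + (b₁ : ℂ) * γ + (b₂ : ℂ) * γ ^ 2} = {γ₀, γ₁, γ₂}) :
    ((-(γ₀ * γ₁ * γ₂)).im = 0 ∧ (γ₀ * γ₁ + γ₀ * γ₂ + γ₁ * γ₂).im = 0 ∧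
      (-γ₀ - γ₁ - γ₂).im = 0) ∧
    ∀ M : ℝ, 4 * m ^ 2 ≤ M →
      (M : ℂ) ^ 3 + (-γ₀ - γ₁ - γ₂) * (M : ℂ) ^ 2 +
        (γ₀ * γ₁ + γ₀ * γ₂ + γ₁ * γ₂) * (M : ℂ) + (-(γ₀ * γ₁ * γ₂)) ≠ 0 := by
  set s : Finset ℂ := {γ₀, γ₁, γ₂}
  have hs : s.val = γ₀ ::ₘ γ₁ ::ₘ {γ₂} := by
    simp [s, hne₀₁, hne₀₂, hne₁₂]
  have hconj : Set.MapsTo conj (s : Set ℂ) s := by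
    simpa [s, hsol] using mapsTo_conj_solutions m a₁ a₂ b₀ b₁ b₂
  have hreal (n : ℕ) : (s.val.esymm n).im = 0 :=
    Complex.conj_eq_iff_im.mp <|
      (starRingEnd ℂ).map_esymm_val_of_mapsTo (RingHom.injective _) hconj n
  refine ⟨⟨?_, ?_, ?_⟩, fun M hM ↦ ?_⟩
  · rw [Complex.neg_im, ← Multiset.esymm_triple_three, ← hs, hreal, neg_zero]
  · rw [← Multiset.esymm_triple_two, ← hs, hreal]
  · rw [show -γ₀ - γ₁ - γ₂ = -(γ₀ + γ₁ + γ₂) by ring, Complex.neg_im,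
      ← Multiset.esymm_triple_one, ← hs, hreal, neg_zero]
  · rw [show (M : ℂ) ^ 3 + (-γ₀ - γ₁ - γ₂) * (M : ℂ) ^ 2 + (γ₀ * γ₁ + γ₀ * γ₂ + γ₁ * γ₂) * M
        + -(γ₀ * γ₁ * γ₂) = (M - γ₀) * (M - γ₁) * (M - γ₂) by ring]
    exact mul_ne_zero (mul_ne_zero (ofReal_sub_ne_zero_of_mem_Dset hM hγ₀)
      (ofReal_sub_ne_zero_of_mem_Dset hM hγ₁)) (ofReal_sub_ne_zero_of_mem_Dset hM hγ₂)

theorem stmt_8 (m : ℝ) (hm : 0 < m) (a₁ a₂ b₀ b₁ b₂ : ℝ) (γ₀ γ₁ γ₂ : ℂ)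
    (hγ₀ : γ₀ ∈ Dset m) (hγ₁ : γ₁ ∈ Dset m) (hγ₂ : γ₂ ∈ Dset m)
    (hne₀₁ : γ₀ ≠ γ₁) (hne₀₂ : γ₀ ≠ γ₂) (hne₁₂ : γ₁ ≠ γ₂)
    (hsol : {γ : ℂ | γ ∈ Dset m ∧
        γ * ((a₁ : ℂ) - γ) * ((a₂ : ℂ) - γ) * Jc m γ =
          (b₀ : ℂ) + (b₁ : ℂ) * γ + (b₂ : ℂ) * γ ^ 2} = {γ₀, γ₁, γ₂}) :
    ((-(γ₀ * γ₁ * γ₂)).im = 0 ∧ (γ₀ * γ₁ + γ₀ * γ₂ + γ₁ * γ₂).im = 0 ∧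
      (-γ₀ - γ₁ - γ₂).im = 0) ∧
    ∀ M : ℝ, 4 * m ^ 2 ≤ M →
      (M : ℂ) ^ 3 + (-γ₀ - γ₁ - γ₂) * (M : ℂ) ^ 2 +
        (γ₀ * γ₁ + γ₀ * γ₂ + γ₁ * γ₂) * (M : ℂ) + (-(γ₀ * γ₁ * γ₂)) ≠ 0 :=
  stmt_8_general m a₁ a₂ b₀ b₁ b₂ γ₀ γ₁ γ₂ hγ₀ hγ₁ hγ₂ hne₀₁ hne₀₂ hne₁₂ hsol
end

section
/- Let m > 0 and let f : ℝ → ℝ be continuous with compact support. Then (1/(2π)³) · ∫_{ℝ³} f(2·√(‖q‖² + m²)) / (4·(‖q‖² + m²)) dq = (1/(16π²)) · ∫_{2m}^∞ f(s)·√(1 − 4m²/s²) ds, where the left-hand integral is over q in three-dimensional Euclidean space with Lebesgue measure and ‖q‖ is the Euclidean norm, and the right-hand integral is the Lebesgue integral over the set {s : ℝ | s ≥ 2m}. -/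
open MeasureTheory Set Real

/-!
In spherical coordinates the left side is `4π ∫₀^∞ r² h(r) dr / (2π)³` for the radial profile
`h(r) = f(2√(r² + m²)) / (4(r² + m²))`. The substitution `s = 2√(r² + m²)` maps `(0, ∞)` onto
`(2m, ∞)` with `ds = 2r / √(r² + m²) dr`, and `√(1 - 4m²/s²) = r / √(r² + m²)`, so the integrand
on the right pulls back to `8 r² h(r)`.
-/

theorem integral_fun_norm_euclideanSpace_fin_three {F : Type*} [NormedAddCommGroup F]
    [NormedSpace ℝ F] (g : ℝ → F) :
    ∫ q : EuclideanSpace ℝ (Fin 3), g ‖q‖ = (4 * π) • ∫ r in Ioi (0 : ℝ), r ^ 2 • g r := by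
  rw [integral_fun_norm_addHaar, finrank_euclideanSpace_fin, measureReal_def,
    EuclideanSpace.volume_ball_fin_three, ENNReal.ofReal_one, one_pow, one_mul,
    ENNReal.toReal_ofReal (by positivity),
    ← Nat.cast_smul_eq_nsmul ℝ, smul_smul]
  congr 1
  ring

theorem image_two_mul_sqrt_sq_add_sq_Ioi_zero {m : ℝ} (hm : 0 ≤ m) :
    (fun r => 2 * √(r ^ 2 + m ^ 2)) '' Ioi 0 = Ioi (2 * m) := by
  ext s
  constructor
  · rintro ⟨r, hr, rfl⟩
    have hlt : m < √(r ^ 2 + m ^ 2) := by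
      rw [lt_sqrt hm]
      nlinarith [mem_Ioi.1 hr]
    simp only [mem_Ioi]
    linarith
  · intro hs
    have hs : 2 * m < s := hs
    have hpos : 0 < s ^ 2 / 4 - m ^ 2 := by nlinarith
    refine ⟨√(s ^ 2 / 4 - m ^ 2), sqrt_pos.2 hpos, ?_⟩
    simp only
    rw [sq_sqrt hpos.le, sub_add_cancel, show s ^ 2 / 4 = (s / 2) ^ 2 by ring,
      sqrt_sq (by linarith)]
    ring

theorem integral_Ioi_two_mul_eq_integral_comp_two_mul_sqrt_sq_add_sq {E : Type*}
    [NormedAddCommGroup E] [NormedSpace ℝ E] {m : ℝ} (hm : 0 ≤ m) (F : ℝ → E) :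
    ∫ s in Ioi (2 * m), F s =
      ∫ r in Ioi 0, (2 * r / √(r ^ 2 + m ^ 2)) • F (2 * √(r ^ 2 + m ^ 2)) := by
  have hderiv : ∀ r ∈ Ioi (0 : ℝ), HasDerivWithinAt (fun r => 2 * √(r ^ 2 + m ^ 2))
      (2 * r / √(r ^ 2 + m ^ 2)) (Ioi 0) r := by
    intro r hr
    have hne : r ^ 2 + m ^ 2 ≠ 0 := by nlinarith [mem_Ioi.1 hr]
    refine (((hasDerivAt_pow 2 r).add_const (m ^ 2)).sqrt hne |>.const_mul 2).hasDerivWithinAt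
      |>.congr_deriv ?_
    field_simp
    ring
  have hinj : InjOn (fun r => 2 * √(r ^ 2 + m ^ 2)) (Ioi 0) := by
    intro a ha b hb hab
    have hsq : a ^ 2 + m ^ 2 = b ^ 2 + m ^ 2 :=
      (sqrt_inj (by positivity) (by positivity)).1 (by simpa using hab)
    exact (pow_left_inj₀ (le_of_lt ha) (le_of_lt hb) two_ne_zero).1 (by linarith)
  rw [← image_two_mul_sqrt_sq_add_sq_Ioi_zero hm,
    integral_image_eq_integral_abs_deriv_smul measurableSet_Ioi hderiv hinj]
  refine setIntegral_congr_fun measurableSet_Ioi fun r hr => ?_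
  rw [abs_of_nonneg (by have := mem_Ioi.1 hr; positivity)]

theorem sqrt_one_sub_four_mul_sq_div_two_mul_sqrt_sq_add_sq {r m : ℝ} (hr : 0 ≤ r)
    (h : r ^ 2 + m ^ 2 ≠ 0) :
    √(1 - 4 * m ^ 2 / (2 * √(r ^ 2 + m ^ 2)) ^ 2) = r / √(r ^ 2 + m ^ 2) := by
  have hsum : 0 ≤ r ^ 2 + m ^ 2 := by positivity
  have hratio : 1 - 4 * m ^ 2 / (2 ^ 2 * (r ^ 2 + m ^ 2)) = r ^ 2 / (r ^ 2 + m ^ 2) := by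
    field_simp
    ring
  rw [mul_pow, sq_sqrt hsum, hratio, sqrt_div' _ hsum, sqrt_sq hr]

theorem stmt_11_general (m : ℝ) (hm : 0 < m) (f : ℝ → ℝ) :
    (1 / (2 * Real.pi) ^ 3) *
        ∫ q : EuclideanSpace ℝ (Fin 3),
          f (2 * Real.sqrt (‖q‖ ^ 2 + m ^ 2)) / (4 * (‖q‖ ^ 2 + m ^ 2)) =
      (1 / (16 * Real.pi ^ 2)) *
        ∫ s in Set.Ici (2 * m), f s * Real.sqrt (1 - 4 * m ^ 2 / s ^ 2) := by
  have hpoint : ∀ r ∈ Ioi (0 : ℝ),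
      2 * r / √(r ^ 2 + m ^ 2) * (f (2 * √(r ^ 2 + m ^ 2)) *
        √(1 - 4 * m ^ 2 / (2 * √(r ^ 2 + m ^ 2)) ^ 2)) =
      8 * (r ^ 2 * (f (2 * √(r ^ 2 + m ^ 2)) / (4 * (r ^ 2 + m ^ 2)))) := by
    intro r hr
    have hsum : 0 < r ^ 2 + m ^ 2 := by positivity
    rw [sqrt_one_sub_four_mul_sq_div_two_mul_sqrt_sq_add_sq hr.le hsum.ne']
    field_simp
    rw [sq_sqrt hsum.le]
    ring
  rw [integral_fun_norm_euclideanSpace_fin_three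
      (fun r => f (2 * √(r ^ 2 + m ^ 2)) / (4 * (r ^ 2 + m ^ 2))),
    integral_Ici_eq_integral_Ioi,
    integral_Ioi_two_mul_eq_integral_comp_two_mul_sqrt_sq_add_sq hm.le]
  simp only [smul_eq_mul]
  rw [setIntegral_congr_fun measurableSet_Ioi hpoint, integral_const_mul]
  field_simp
  ring

theorem stmt_11 (m : ℝ) (hm : 0 < m) (f : ℝ → ℝ)
    (hf : Continuous f) (hsupp : HasCompactSupport f) :
    (1 / (2 * Real.pi) ^ 3) *
        ∫ q : EuclideanSpace ℝ (Fin 3),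
          f (2 * Real.sqrt (‖q‖ ^ 2 + m ^ 2)) / (4 * (‖q‖ ^ 2 + m ^ 2)) =
      (1 / (16 * Real.pi ^ 2)) *
        ∫ s in Set.Ici (2 * m), f s * Real.sqrt (1 - 4 * m ^ 2 / s ^ 2) :=
  stmt_11_general m hm f
end

section
/- Let f : ℝ → ℝ, let x ∈ ℝ, ε > 0, α ∈ (0, 1] and C ≥ 0, and suppose that |f(u) − f(v)| ≤ C·|u − v|^α for all u, v ∈ [x − ε, x + ε]. Then the principal value integral exists: there is a real number L such that the integrals ∫_{[x−ε, x+ε] ∖ (x−η, x+η)} f(u)/(u − x) du converge to L as η → 0⁺. -/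
open MeasureTheory Set Real Filter Topology

/-!
On the truncated region `{u : η ≤ |u - x| ≤ ε}`, which is symmetric about `x`, the kernel
`1 / (u - x)` is odd, so its integral vanishes and the truncated integral of `f u / (u - x)` equals
that of the difference quotient `(f u - f x) / (u - x)`. The Hölder bound dominates the quotient by
`C |u - x| ^ (α - 1)`, integrable because `α > 0`, so by dominated convergence the truncated
integrals converge to the integral of the quotient over `[x - ε, x + ε]`.
-/

theorem continuousOn_of_dist_le_mul_rpow {X Y : Type*} [PseudoMetricSpace X]
    [PseudoMetricSpace Y] {f : X → Y} {s : Set X} {C α : ℝ} (hα : 0 < α)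
    (h : ∀ u ∈ s, ∀ v ∈ s, dist (f u) (f v) ≤ C * dist u v ^ α) : ContinuousOn f s := by
  intro u hu
  rw [ContinuousWithinAt, tendsto_iff_dist_tendsto_zero]
  have hlim : Tendsto (fun v => C * dist v u ^ α) (𝓝[s] u) (𝓝 0) := by
    have := (((continuous_id.dist (continuous_const (y := u))).rpow_const
      fun _ => Or.inr hα.le).const_mul C).tendsto u
    simpa [Real.zero_rpow hα.ne'] using this.mono_left nhdsWithin_le_nhds
  exact squeeze_zero' (Eventually.of_forall fun v => dist_nonneg)
    (eventually_nhdsWithin_of_forall fun v hv => h v hv u hu) hlim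

theorem integrableOn_Icc_abs_sub_rpow {β : ℝ} (hβ : -1 < β) (x a b : ℝ) :
    IntegrableOn (fun u => |u - x| ^ β) (Icc a b) := by
  have h0 : LocallyIntegrable (fun t : ℝ => |t| ^ β) :=
    locallyIntegrable_of_norm_le_rpow (by simp) (C := 1) (α := -β) (by simp; linarith)
      (ae_of_all _ fun t => by simp [abs_of_nonneg (rpow_nonneg (abs_nonneg t) β)])
      (continuous_abs.measurable.pow_const β).aestronglyMeasurable
  have := h0.integrableOn_isCompact (isCompact_Icc (a := a - x) (b := b - x))
  rwa [← (measurePreserving_sub_right volume x).integrableOn_comp_preimage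
    (measurableEmbedding_subRight x), preimage_sub_const_Icc, sub_add_cancel,
    sub_add_cancel] at this

theorem integrableOn_Icc_div_sub_of_abs_sub_le_rpow {f : ℝ → ℝ} {x a b C α : ℝ} (hα : 0 < α)
    (hf : ContinuousOn f (Icc a b)) (h : ∀ u ∈ Icc a b, |f u - f x| ≤ C * |u - x| ^ α) :
    IntegrableOn (fun u => (f u - f x) / (u - x)) (Icc a b) := by
  have hmeas : AEStronglyMeasurable (fun u => (f u - f x) / (u - x))
      (volume.restrict (Icc a b)) :=
    (((hf.aestronglyMeasurable measurableSet_Icc).aemeasurable.sub_const _).div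
      (measurable_id.sub_const x).aemeasurable).aestronglyMeasurable
  refine ((integrableOn_Icc_abs_sub_rpow (β := α - 1) (by linarith) x a b).const_mul C).mono'
    hmeas ?_
  filter_upwards [ae_restrict_mem measurableSet_Icc, ae_restrict_of_ae (volume.ae_ne x)]
    with u hu hux
  have hpos : 0 < |u - x| := abs_pos.mpr (sub_ne_zero.mpr hux)
  calc ‖(f u - f x) / (u - x)‖ = |f u - f x| / |u - x| := by rw [Real.norm_eq_abs, abs_div]
    _ ≤ C * |u - x| ^ α / |u - x| := by gcongr; exact h u hu
    _ = C * |u - x| ^ (α - 1) := by rw [mul_div_assoc, Real.rpow_sub hpos, Real.rpow_one]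

theorem setIntegral_eq_zero_of_reflect {E : Type*} [NormedAddCommGroup E] [NormedSpace ℝ E]
    {S : Set ℝ} {g : ℝ → E} (a : ℝ) (hSm : MeasurableSet S) (hS : ∀ u, a - u ∈ S ↔ u ∈ S)
    (hg : ∀ u, g (a - u) = -g u) : ∫ u in S, g u = 0 := by
  have hind : ∀ u, S.indicator g (a - u) = -S.indicator g u := by
    intro u
    by_cases hu : u ∈ S
    · rw [indicator_of_mem ((hS u).2 hu), indicator_of_mem hu, hg]
    · rw [indicator_of_notMem (mt (hS u).1 hu), indicator_of_notMem hu, neg_zero]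
  have h := integral_sub_left_eq_self (S.indicator g) volume a
  simp only [hind, integral_neg] at h
  have h2 : (2 : ℝ) • ∫ u, S.indicator g u = 0 := by
    rw [two_smul]
    nth_rw 1 [← h]
    exact neg_add_cancel _
  rw [← integral_indicator hSm]
  simpa using h2

theorem tendsto_setIntegral_le_dist_nhdsGT {X E : Type*} [MetricSpace X] [MeasurableSpace X]
    [OpensMeasurableSpace X] [NormedAddCommGroup E] [NormedSpace ℝ E] {μ : Measure X}
    [NullSingletonClass μ]
    {s : Set X} {g : X → E} (x : X) (hg : IntegrableOn g s μ) :
    Tendsto (fun η : ℝ => ∫ u in {u | u ∈ s ∧ η ≤ dist u x}, g u ∂μ) (𝓝[>] 0)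
      (𝓝 (∫ u in s, g u ∂μ)) := by
  have hT : ∀ η : ℝ, MeasurableSet {u | η ≤ dist u x} := fun η =>
    (isClosed_le continuous_const (continuous_id.dist continuous_const)).measurableSet
  have hrepr : ∀ η : ℝ, ∫ u in {u | u ∈ s ∧ η ≤ dist u x}, g u ∂μ
      = ∫ u, {u | η ≤ dist u x}.indicator g u ∂(μ.restrict s) := fun η => by
    rw [integral_indicator (hT η), Measure.restrict_restrict (hT η), inter_comm]
    rfl
  simp only [hrepr]
  refine tendsto_integral_filter_of_dominated_convergence (fun u => ‖g u‖)
    (Eventually.of_forall fun η => hg.aestronglyMeasurable.indicator (hT η))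
    (Eventually.of_forall fun η => Eventually.of_forall fun u => norm_indicator_le_norm_self g u)
    hg.norm ?_
  filter_upwards [ae_restrict_of_ae (μ.ae_ne x)] with u hux
  refine tendsto_const_nhds.congr' ?_
  filter_upwards [Ioo_mem_nhdsGT (dist_pos.2 hux)] with η hη
  exact (indicator_of_mem (s := {u | η ≤ dist u x}) hη.2.le g).symm

theorem setIntegral_div_sub_eq_setIntegral_sub_div_sub {f : ℝ → ℝ} {x ε η : ℝ} (hη : 0 < η)
    (hg : IntegrableOn (fun u => (f u - f x) / (u - x)) (Icc (x - ε) (x + ε))) :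
    ∫ u in {u | u ∈ Icc (x - ε) (x + ε) ∧ η ≤ dist u x}, f u / (u - x)
      = ∫ u in {u | u ∈ Icc (x - ε) (x + ε) ∧ η ≤ dist u x}, (f u - f x) / (u - x) := by
  set S := {u | u ∈ Icc (x - ε) (x + ε) ∧ η ≤ dist u x}
  have hSm : MeasurableSet S := measurableSet_Icc.inter
    (isClosed_le continuous_const (continuous_id.dist continuous_const)).measurableSet
  have hSη : ∀ u ∈ S, η ≤ |u - x| := fun u hu => hu.2
  have hinv : IntegrableOn (fun u => (u - x)⁻¹) S := by
    refine Measure.integrableOn_of_bounded (M := η⁻¹)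
      ((measure_mono fun u hu => hu.1).trans_lt measure_Icc_lt_top).ne
      (measurable_id.sub_const x).inv.aestronglyMeasurable ?_
    filter_upwards [ae_restrict_mem hSm] with u hu
    rw [norm_inv, Real.norm_eq_abs]
    exact inv_anti₀ hη (hSη u hu)
  have hodd : ∫ u in S, (u - x)⁻¹ = 0 := by
    refine setIntegral_eq_zero_of_reflect (2 * x) hSm (fun u => ?_) fun u => ?_
    · simp only [S, mem_ofPred_eq, mem_Icc, Real.dist_eq, show 2 * x - u - x = -(u - x) by ring,
        abs_neg]
      constructor <;> rintro ⟨⟨h1, h2⟩, h3⟩ <;> exact ⟨⟨by linarith, by linarith⟩, h3⟩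
    · rw [show 2 * x - u - x = -(u - x) by ring, inv_neg]
  calc ∫ u in S, f u / (u - x) = ∫ u in S, ((f u - f x) / (u - x) + f x * (u - x)⁻¹) := by
        refine setIntegral_congr_fun hSm fun u hu => ?_
        have : u - x ≠ 0 := abs_pos.mp (hη.trans_le (hSη u hu))
        field_simp
        ring
    _ = ∫ u in S, (f u - f x) / (u - x) := by
        rw [integral_add (hg.mono_set fun u hu => hu.1) (hinv.const_mul _), integral_const_mul,
          hodd, mul_zero, add_zero]

theorem stmt_15_general (f : ℝ → ℝ) (x ε : ℝ) (α : ℝ) (hα0 : 0 < α)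
    (C : ℝ)
    (hHolder : ∀ u ∈ Set.Icc (x - ε) (x + ε), ∀ v ∈ Set.Icc (x - ε) (x + ε),
      |f u - f v| ≤ C * |u - v| ^ α) :
    ∃ L : ℝ,
      Tendsto
        (fun η : ℝ =>
          ∫ u in {u : ℝ | x - ε ≤ u ∧ u ≤ x + ε ∧ η ≤ |u - x|}, f u / (u - x))
        (nhdsWithin 0 (Set.Ioi 0)) (nhds L) := by
  have hf : ContinuousOn f (Icc (x - ε) (x + ε)) :=
    continuousOn_of_dist_le_mul_rpow hα0 (by simpa only [Real.dist_eq] using hHolder)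
  have hg : IntegrableOn (fun u => (f u - f x) / (u - x)) (Icc (x - ε) (x + ε)) :=
    integrableOn_Icc_div_sub_of_abs_sub_le_rpow hα0 hf fun u hu =>
      hHolder u hu x ⟨by linarith [hu.1, hu.2], by linarith [hu.1, hu.2]⟩
  refine ⟨_, (tendsto_setIntegral_le_dist_nhdsGT x hg).congr' ?_⟩
  filter_upwards [self_mem_nhdsWithin] with η hη
  rw [← setIntegral_div_sub_eq_setIntegral_sub_div_sub hη hg]
  simp only [mem_Icc, Real.dist_eq, and_assoc]

theorem stmt_15 (f : ℝ → ℝ) (x ε : ℝ) (hε : 0 < ε) (α : ℝ) (hα0 : 0 < α) (hα1 : α ≤ 1)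
    (C : ℝ) (hC : 0 ≤ C)
    (hHolder : ∀ u ∈ Set.Icc (x - ε) (x + ε), ∀ v ∈ Set.Icc (x - ε) (x + ε),
      |f u - f v| ≤ C * |u - v| ^ α) :
    ∃ L : ℝ,
      Tendsto
        (fun η : ℝ =>
          ∫ u in {u : ℝ | x - ε ≤ u ∧ u ≤ x + ε ∧ η ≤ |u - x|}, f u / (u - x))
        (nhdsWithin 0 (Set.Ioi 0)) (nhds L) :=
  stmt_15_general f x ε α hα0 C hHolder
end

section
/- Let m > 0 and δ > 0, and define φ(M) := −16π² / ( (log(δ·M/(4m²)))² + π² ). Then: (i) for every real t ≠ 0 and every P ≥ 0 the improper integral C(t, P) := lim_{R → ∞} ( −∫_{4m²}^R φ(M)·sin(t·√(P + M))/√(P + M) dM ) exists, and there is a constant K > 0, independent of t and P, such that |C(t, P)| ≤ K/|t| for all t ≠ 0 and all P ≥ 0; (ii) there is a function h : ℝ → ℝ that is Lebesgue integrable on (0, 1] such that |C(t, P)| ≤ h(t) for all t ∈ (0, 1] and all P ≥ 0. -/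
/-!
Write `c = δ / (4m²)`, so that `φ M = -16π² / (log (c M)² + π²)`. Since
`sin (t √(P + M)) / √(P + M) = -(2 / t) · d/dM cos (t √(P + M))`, one integration by parts
moves the derivative onto `φ`, whose derivative is absolutely integrable: it is dominated by
`16` times the derivative of `arctan (log (c M) / π)`, so `∫ |φ'| ≤ 16π`. This gives the limit
and the bound `(32 + 32π) / |t|`.

For small `t > 0` split the integral at `1/t` and `1/t²`. On both finite pieces
`|sin (t s) / s| ≤ t`, combined with `|φ| ≤ 16` on `[4m², 1/t]` and with
`|φ| ≤ 16π² / log (c / t)²` on `[1/t, 1/t²]`; beyond `1/t²` the weight is monotone, so the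
integrated-by-parts tail is at most `4 |φ (1/t²)| / t`. The resulting bound
`16 + 80π² / (t log (c / t)²)` is integrable near `0`, with antiderivative `1 / log (c / t)`.
-/

open MeasureTheory Set Real Filter Topology

theorem tendsto_intervalIntegral_mul_deriv_atTop {a : ℝ} {u u' v v' : ℝ → ℝ}
    (hu : ∀ x ∈ Ici a, HasDerivAt u (u' x) x) (hv : ∀ x ∈ Ici a, HasDerivAt v (v' x) x)
    (hu' : IntegrableOn u' (Ioi a)) (hv' : ContinuousOn v' (Ici a))
    (hu'v : IntegrableOn (fun x => u' x * v x) (Ioi a))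
    (huv : Tendsto (fun x => u x * v x) atTop (𝓝 0)) :
    Tendsto (fun b => ∫ x in a..b, u x * v' x) atTop
      (𝓝 (-(u a * v a) - ∫ x in Ioi a, u' x * v x)) := by
  have hlim := (huv.sub_const (u a * v a)).sub
    (intervalIntegral_tendsto_integral_Ioi a hu'v tendsto_id)
  rw [zero_sub] at hlim
  refine hlim.congr' ?_
  filter_upwards [eventually_ge_atTop a] with b hab
  have hsub : uIcc a b ⊆ Ici a := by rw [uIcc_of_le hab]; exact Icc_subset_Ici_self
  refine (intervalIntegral.integral_mul_deriv_eq_deriv_mul (fun x hx => hu x (hsub hx))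
    (fun x hx => hv x (hsub hx)) ?_ ?_).symm
  · exact (intervalIntegrable_iff_integrableOn_Ioc_of_le hab).2
      (hu'.mono_set Ioc_subset_Ioi_self)
  · exact (hv'.mono Icc_subset_Ici_self).intervalIntegrable_of_Icc hab

section Oscillatory

variable {φ φ' : ℝ → ℝ} {t P Y X : ℝ}

lemma hasDerivAt_cos_mul_sqrt {M : ℝ} (hM : 0 < P + M) :
    HasDerivAt (fun M => cos (t * √(P + M)))
      (-(t / 2) * (sin (t * √(P + M)) / √(P + M))) M := by
  have hsqrt := ((hasDerivAt_id' M).const_add P).sqrt hM.ne'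
  convert (hsqrt.const_mul t).cos using 1
  ring

lemma continuousOn_sin_div_sqrt (hPY : 0 < P + Y) :
    ContinuousOn (fun M => sin (t * √(P + M)) / √(P + M)) (Ici Y) :=
  ContinuousOn.div (by fun_prop) (by fun_prop) fun M hM =>
    (Real.sqrt_pos.2 (by linarith [hM.out])).ne'

lemma abs_sin_mul_div_le (t s : ℝ) : |sin (t * s) / s| ≤ |t| := by
  rcases eq_or_ne s 0 with rfl | hs
  · simp
  rw [abs_div, div_le_iff₀ (abs_pos.2 hs), ← abs_mul]
  exact abs_sin_le_abs

lemma abs_intervalIntegral_mul_sin_div_sqrt_le {B R : ℝ} (hYR : Y ≤ R)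
    (hB : ∀ M ∈ Icc Y R, |φ M| ≤ B) :
    |∫ M in Y..R, φ M * sin (t * √(P + M)) / √(P + M)| ≤ B * |t| * (R - Y) := by
  have h := intervalIntegral.norm_integral_le_of_norm_le_const
    (f := fun M => φ M * sin (t * √(P + M)) / √(P + M)) (C := B * |t|) (a := Y) (b := R)
    fun M hM => by
      rw [uIoc_of_le hYR] at hM
      rw [Real.norm_eq_abs, mul_div_assoc, abs_mul]
      exact mul_le_mul (hB M (Ioc_subset_Icc_self hM)) (abs_sin_mul_div_le _ _)
        (abs_nonneg _) ((abs_nonneg _).trans (hB M (Ioc_subset_Icc_self hM)))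
  rwa [Real.norm_eq_abs, abs_of_nonneg (sub_nonneg.2 hYR)] at h

/-- The value of `-∫_Y^∞ φ M sin (t √(P + M)) / √(P + M) dM` after one integration by
parts, `φ'` being the derivative of `φ`. -/
noncomputable def oscTail (φ φ' : ℝ → ℝ) (t P Y : ℝ) : ℝ :=
  -(2 / t) * (φ Y * cos (t * √(P + Y)) + ∫ M in Ioi Y, φ' M * cos (t * √(P + M)))

lemma integrableOn_mul_cos (hφ' : IntegrableOn φ' (Ioi Y)) :
    IntegrableOn (fun M => φ' M * cos (t * √(P + M))) (Ioi Y) :=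
  hφ'.mul_bdd (by fun_prop) (Eventually.of_forall fun _ => abs_cos_le_one _)

theorem tendsto_oscTail (ht : t ≠ 0) (hPY : 0 < P + Y)
    (hφ : ∀ M ∈ Ici Y, HasDerivAt φ (φ' M) M) (hφ' : IntegrableOn φ' (Ioi Y))
    (hφ0 : Tendsto φ atTop (𝓝 0)) :
    Tendsto (fun R => -∫ M in Y..R, φ M * sin (t * √(P + M)) / √(P + M)) atTop
      (𝓝 (oscTail φ φ' t P Y)) := by
  have hPM : ∀ M ∈ Ici Y, 0 < P + M := fun M hM => by linarith [hM.out]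
  have hcos_bdd : Tendsto (fun M => φ M * cos (t * √(P + M))) atTop (𝓝 0) :=
    hφ0.zero_mul_isBoundedUnder_le ⟨1, eventually_map.2 (Eventually.of_forall fun _ =>
      abs_cos_le_one _)⟩
  have hibp := (tendsto_intervalIntegral_mul_deriv_atTop hφ
    (fun M hM => hasDerivAt_cos_mul_sqrt (t := t) (hPM M hM)) hφ'
    (continuousOn_const.mul (continuousOn_sin_div_sqrt hPY))
    (integrableOn_mul_cos hφ') hcos_bdd).const_mul (2 / t)
  convert hibp using 1
  · ext R
    rw [← intervalIntegral.integral_const_mul, ← intervalIntegral.integral_neg]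
    congr 1
    ext M
    field_simp
  · rw [oscTail]
    ring_nf

theorem oscTail_eq_neg_integral_add (ht : t ≠ 0) (hPY : 0 < P + Y)
    (hφ : ∀ M ∈ Ici Y, HasDerivAt φ (φ' M) M) (hφ' : IntegrableOn φ' (Ioi Y))
    (hφ0 : Tendsto φ atTop (𝓝 0)) (hYX : Y ≤ X) :
    oscTail φ φ' t P Y =
      -(∫ M in Y..X, φ M * sin (t * √(P + M)) / √(P + M)) + oscTail φ φ' t P X := by
  have hf : ContinuousOn (fun M => φ M * sin (t * √(P + M)) / √(P + M)) (Ici Y) :=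
    ((HasDerivAt.continuousOn hφ).mul (continuousOn_sin_div_sqrt (t := t) hPY)).congr
      fun M _ => mul_div_assoc _ _ _
  have hX := tendsto_oscTail ht (show 0 < P + X by linarith)
    (fun M hM => hφ M (Ici_subset_Ici.2 hYX hM)) (hφ'.mono_set (Ioi_subset_Ioi hYX)) hφ0
  refine tendsto_nhds_unique (tendsto_oscTail ht hPY hφ hφ' hφ0) ((hX.const_add _).congr' ?_)
  filter_upwards [eventually_ge_atTop X] with R hXR
  rw [← intervalIntegral.integral_add_adjacent_intervals
    ((hf.mono Icc_subset_Ici_self).intervalIntegrable_of_Icc hYX)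
    ((hf.mono (Icc_subset_Ici_self.trans (Ici_subset_Ici.2 hYX))).intervalIntegrable_of_Icc hXR)]
  ring

theorem abs_oscTail_le (hφ' : IntegrableOn φ' (Ioi Y)) :
    |oscTail φ φ' t P Y| ≤ 2 / |t| * (|φ Y| + ∫ M in Ioi Y, |φ' M|) := by
  have hint : |∫ M in Ioi Y, φ' M * cos (t * √(P + M))| ≤ ∫ M in Ioi Y, |φ' M| :=
    norm_integral_le_of_norm_le (f := fun M => φ' M * cos (t * √(P + M))) hφ'.abs
      (Eventually.of_forall fun M => by
        rw [Real.norm_eq_abs, abs_mul]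
        exact mul_le_of_le_one_right (abs_nonneg _) (abs_cos_le_one _))
  have hcos : |φ Y * cos (t * √(P + Y))| ≤ |φ Y| := by
    rw [abs_mul]; exact mul_le_of_le_one_right (abs_nonneg _) (abs_cos_le_one _)
  rw [oscTail, abs_mul, abs_neg, abs_div, abs_two]
  gcongr
  exact (abs_add_le _ _).trans (add_le_add hcos hint)

end Oscillatory

theorem integrableOn_inv_mul_log_div_sq {c b : ℝ} (hb : 0 < b) (hbc : b < c) :
    IntegrableOn (fun x => (x * log (c / x) ^ 2)⁻¹) (Ioc 0 b) := by
  have hc : 0 < c := hb.trans hbc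
  have hlog_pos : ∀ x, 0 < x → x ≤ b → 0 < log (c / x) := fun x hx hxb =>
    log_pos ((one_lt_div hx).2 (hxb.trans_lt hbc))
  have hderiv : ∀ x ∈ Ioo 0 b,
      HasDerivAt (fun x => (log (c / x))⁻¹) (x * log (c / x) ^ 2)⁻¹ x := fun x hx => by
    have hlog := ((hasDerivAt_const x c).fun_div (hasDerivAt_id' x) hx.1.ne').log
      (div_pos hc hx.1).ne'
    refine (hlog.inv (hlog_pos x hx.1 hx.2.le).ne').congr_deriv ?_
    field_simp
    ring
  -- the antiderivative vanishes at `0`, where `log (c / 0) = log 0 = 0`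
  have hcont : ContinuousOn (fun x => (log (c / x))⁻¹) (Icc 0 b) := by
    intro x hx
    rcases hx.1.eq_or_lt with rfl | hx0
    · have h : Tendsto (fun x => (log (c / x))⁻¹) (𝓝[>] 0) (𝓝 0) :=
        tendsto_inv_atTop_zero.comp <| tendsto_log_atTop.comp <|
          (tendsto_inv_nhdsGT_zero.const_mul_atTop hc).congr fun x => (div_eq_mul_inv c x).symm
      have h' : ContinuousWithinAt (fun x => (log (c / x))⁻¹) (Ioi 0) 0 := by
        simpa [ContinuousWithinAt] using h
      exact (continuousWithinAt_Ioi_iff_Ici.1 h').mono Icc_subset_Ici_self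
    · exact (((continuousAt_const.div continuousAt_id hx0.ne').log (div_pos hc hx0).ne').inv₀
        (hlog_pos x hx0 hx.2).ne').continuousWithinAt
  exact intervalIntegral.integrableOn_deriv_of_nonneg hcont hderiv fun x hx => by
    have := hx.1; positivity

section Weight

variable {c M Y : ℝ}

noncomputable def weight (c M : ℝ) : ℝ := -(16 * π ^ 2) / (log (c * M) ^ 2 + π ^ 2)

noncomputable def weightDeriv (c M : ℝ) : ℝ :=
  32 * π ^ 2 * log (c * M) / (M * (log (c * M) ^ 2 + π ^ 2) ^ 2)

lemma abs_weight (c M : ℝ) : |weight c M| = 16 * π ^ 2 / (log (c * M) ^ 2 + π ^ 2) := by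
  rw [weight, abs_div, abs_neg, abs_of_pos (by positivity), abs_of_pos (by positivity)]

lemma abs_weight_le (c M : ℝ) : |weight c M| ≤ 16 := by
  rw [abs_weight, div_le_iff₀ (by positivity)]
  nlinarith [sq_nonneg (log (c * M))]

lemma abs_weight_le_of_le_log {w : ℝ} (hw : 0 < w) (h : w ≤ log (c * M)) :
    |weight c M| ≤ 16 * π ^ 2 / w ^ 2 := by
  rw [abs_weight]
  gcongr
  nlinarith [sq_nonneg π]

lemma hasDerivAt_log_mul (hc : c ≠ 0) (hM : M ≠ 0) :
    HasDerivAt (fun M => log (c * M)) M⁻¹ M := by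
  convert ((hasDerivAt_id' M).const_mul c).log (mul_ne_zero hc hM) using 1
  field_simp

lemma hasDerivAt_weight (hc : c ≠ 0) (hM : M ≠ 0) :
    HasDerivAt (weight c) (weightDeriv c M) M := by
  have hD : log (c * M) ^ 2 + π ^ 2 ≠ 0 := by positivity
  have hden : HasDerivAt (fun M => log (c * M) ^ 2 + π ^ 2) (2 * log (c * M) * M⁻¹) M := by
    simpa using ((hasDerivAt_log_mul hc hM).pow 2).add_const (π ^ 2)
  show HasDerivAt (fun M => -(16 * π ^ 2) / (log (c * M) ^ 2 + π ^ 2)) _ M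
  refine ((hasDerivAt_const M (-(16 * π ^ 2))).fun_div hden hD).congr_deriv ?_
  rw [weightDeriv]
  field_simp
  ring

lemma tendsto_log_mul_atTop (hc : 0 < c) : Tendsto (fun M => log (c * M)) atTop atTop :=
  tendsto_log_atTop.comp (tendsto_id.const_mul_atTop hc)

lemma tendsto_weight_atTop (hc : 0 < c) : Tendsto (weight c) atTop (𝓝 0) :=
  tendsto_const_nhds.div_atTop <| tendsto_atTop_add_const_right _ _ <|
    (tendsto_pow_atTop two_ne_zero).comp (tendsto_log_mul_atTop hc)

lemma hasDerivAt_arctan_log_mul (hc : c ≠ 0) (hM : M ≠ 0) :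
    HasDerivAt (fun M => arctan (log (c * M) / π))
      (π / (M * (log (c * M) ^ 2 + π ^ 2))) M := by
  convert ((hasDerivAt_log_mul hc hM).div_const π).arctan using 1
  field_simp
  ring

lemma tendsto_arctan_log_mul_atTop (hc : 0 < c) :
    Tendsto (fun M => arctan (log (c * M) / π)) atTop (𝓝 (π / 2)) :=
  (tendsto_arctan_atTop.mono_right nhdsWithin_le_nhds).comp
    ((tendsto_log_mul_atTop hc).atTop_div_const pi_pos)

lemma integrableOn_arctan_log_mul_deriv (hc : 0 < c) (hY : 0 < Y) :
    IntegrableOn (fun M => π / (M * (log (c * M) ^ 2 + π ^ 2))) (Ioi Y) :=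
  integrableOn_Ioi_deriv_of_nonneg'
    (fun M hM => hasDerivAt_arctan_log_mul hc.ne' (hY.trans_le hM).ne')
    (fun M hM => by have := hY.trans hM; positivity) (tendsto_arctan_log_mul_atTop hc)

lemma integral_arctan_log_mul_deriv (hc : 0 < c) (hY : 0 < Y) :
    ∫ M in Ioi Y, π / (M * (log (c * M) ^ 2 + π ^ 2)) = π / 2 - arctan (log (c * Y) / π) :=
  integral_Ioi_of_hasDerivAt_of_nonneg'
    (fun M hM => hasDerivAt_arctan_log_mul hc.ne' (hY.trans_le hM).ne')
    (fun M hM => by have := hY.trans hM; positivity) (tendsto_arctan_log_mul_atTop hc)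

lemma abs_weightDeriv_le (hM : 0 < M) :
    |weightDeriv c M| ≤ 16 * (π / (M * (log (c * M) ^ 2 + π ^ 2))) := by
  have hAMGM : 2 * π * |log (c * M)| ≤ log (c * M) ^ 2 + π ^ 2 := by
    nlinarith [sq_nonneg (|log (c * M)| - π), sq_abs (log (c * M))]
  rw [weightDeriv, abs_div, abs_mul, abs_of_pos (by positivity : (0 : ℝ) < 32 * π ^ 2),
    abs_of_pos (by positivity : 0 < M * (log (c * M) ^ 2 + π ^ 2) ^ 2),
    div_le_iff₀ (by positivity)]
  calc 32 * π ^ 2 * |log (c * M)| = 16 * π * (2 * π * |log (c * M)|) := by ring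
    _ ≤ 16 * π * (log (c * M) ^ 2 + π ^ 2) := by gcongr
    _ = _ := by field_simp

lemma integrableOn_weightDeriv (hc : 0 < c) (hY : 0 < Y) :
    IntegrableOn (weightDeriv c) (Ioi Y) :=
  ((integrableOn_arctan_log_mul_deriv hc hY).const_mul 16).mono'
    (by unfold weightDeriv; fun_prop : Measurable (weightDeriv c)).aestronglyMeasurable
    ((ae_restrict_mem measurableSet_Ioi).mono fun M hM => abs_weightDeriv_le (hY.trans hM))

lemma integral_abs_weightDeriv_le (hc : 0 < c) (hY : 0 < Y) :
    ∫ M in Ioi Y, |weightDeriv c M| ≤ 16 * π :=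
  calc ∫ M in Ioi Y, |weightDeriv c M|
      ≤ ∫ M in Ioi Y, 16 * (π / (M * (log (c * M) ^ 2 + π ^ 2))) :=
        setIntegral_mono_on (integrableOn_weightDeriv hc hY).abs
          ((integrableOn_arctan_log_mul_deriv hc hY).const_mul 16) measurableSet_Ioi
          fun M hM => abs_weightDeriv_le (hY.trans hM)
    _ = 16 * (π / 2 - arctan (log (c * Y) / π)) := by
        rw [integral_const_mul, integral_arctan_log_mul_deriv hc hY]
    _ ≤ 16 * π := by linarith [neg_pi_div_two_lt_arctan (log (c * Y) / π)]

lemma integral_abs_weightDeriv_of_one_le (hc : 0 < c) (hY : 1 ≤ c * Y) :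
    ∫ M in Ioi Y, |weightDeriv c M| = |weight c Y| := by
  have hY0 : 0 < Y := pos_of_mul_pos_right (one_pos.trans_le hY) hc.le
  have hderiv : ∀ M ∈ Ici Y, HasDerivAt (weight c) (weightDeriv c M) M :=
    fun M hM => hasDerivAt_weight hc.ne' (hY0.trans_le hM).ne'
  have hnonneg : ∀ M ∈ Ioi Y, 0 ≤ weightDeriv c M := fun M hM => by
    have hM0 := hY0.trans hM
    have : 0 ≤ log (c * M) := log_nonneg (hY.trans (by gcongr; exact hM.out.le))
    rw [weightDeriv]; positivity
  have hweight : weight c Y ≤ 0 :=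
    div_nonpos_of_nonpos_of_nonneg (neg_nonpos.2 (by positivity)) (by positivity)
  rw [setIntegral_congr_fun measurableSet_Ioi fun M hM => abs_of_nonneg (hnonneg M hM),
    integral_Ioi_of_hasDerivAt_of_nonneg' hderiv hnonneg (tendsto_weight_atTop hc),
    abs_of_nonpos hweight, zero_sub]

end Weight

section WeightedTail

variable {c a t P Y : ℝ}

theorem abs_oscTail_weight_le (hc : 0 < c) (hY : 0 < Y) :
    |oscTail (weight c) (weightDeriv c) t P Y| ≤ (32 + 32 * π) / |t| :=
  calc |oscTail (weight c) (weightDeriv c) t P Y|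
      ≤ 2 / |t| * (|weight c Y| + ∫ M in Ioi Y, |weightDeriv c M|) :=
        abs_oscTail_le (integrableOn_weightDeriv hc hY)
    _ ≤ 2 / |t| * (16 + 16 * π) := by
        gcongr
        exacts [abs_weight_le c Y, integral_abs_weightDeriv_le hc hY]
    _ = (32 + 32 * π) / |t| := by ring

theorem abs_oscTail_weight_le_of_one_le (hc : 0 < c) (hY : 1 ≤ c * Y) :
    |oscTail (weight c) (weightDeriv c) t P Y| ≤ 4 / |t| * |weight c Y| := by
  have hY0 : 0 < Y := pos_of_mul_pos_right (one_pos.trans_le hY) hc.le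
  calc |oscTail (weight c) (weightDeriv c) t P Y|
      ≤ 2 / |t| * (|weight c Y| + ∫ M in Ioi Y, |weightDeriv c M|) :=
        abs_oscTail_le (integrableOn_weightDeriv hc hY0)
    _ = 4 / |t| * |weight c Y| := by
        rw [integral_abs_weightDeriv_of_one_le hc hY]
        ring

theorem abs_oscTail_weight_le_of_small (hc : 0 < c) (ha : 0 < a) (hP : 0 ≤ P) (ht : 0 < t)
    (ht1 : t ≤ 1) (hta : t ≤ a⁻¹) (htc : t < c) :
    |oscTail (weight c) (weightDeriv c) t P a| ≤ 16 + 80 * π ^ 2 / (t * log (c / t) ^ 2) := by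
  set w := log (c / t)
  set X := t⁻¹ ^ 2
  have hct : 1 < c / t := (one_lt_div ht).2 htc
  have hw : 0 < w := log_pos hct
  have hlog : ∀ M, t⁻¹ ≤ M → w ≤ log (c * M) := fun M hM =>
    log_le_log (by positivity) (by rw [div_eq_mul_inv]; gcongr)
  have haY : a ≤ t⁻¹ := (le_inv_comm₀ ht ha).1 hta
  have hYX : t⁻¹ ≤ X := le_self_pow₀ ((one_le_inv₀ ht).2 ht1) two_ne_zero
  have hderiv : ∀ M ∈ Ici a, HasDerivAt (weight c) (weightDeriv c M) M :=
    fun M hM => hasDerivAt_weight hc.ne' (ha.trans_le hM).ne'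
  have hsplit₁ := oscTail_eq_neg_integral_add ht.ne' (P := P) (by positivity) hderiv
    (integrableOn_weightDeriv hc ha) (tendsto_weight_atTop hc) haY
  have hsplit₂ := oscTail_eq_neg_integral_add ht.ne' (P := P) (by positivity)
    (fun M hM => hderiv M (haY.trans hM)) (integrableOn_weightDeriv hc (ha.trans_le haY))
    (tendsto_weight_atTop hc) hYX
  have hhead := abs_intervalIntegral_mul_sin_div_sqrt_le (t := t) (P := P) haY
    fun M _ => abs_weight_le c M
  have hmiddle := abs_intervalIntegral_mul_sin_div_sqrt_le (t := t) (P := P) hYX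
    fun M hM => abs_weight_le_of_le_log hw (hlog M hM.1)
  have htail := abs_oscTail_weight_le_of_one_le (t := t) (P := P) (Y := X) hc
    (hct.le.trans (by rw [div_eq_mul_inv]; gcongr))
  have hX := abs_weight_le_of_le_log hw (hlog X hYX)
  rw [abs_of_pos ht] at hhead hmiddle htail
  have hA : 16 * t * (t⁻¹ - a) ≤ 16 := by
    have := mul_inv_cancel₀ ht.ne'
    nlinarith
  have hB : 16 * π ^ 2 / w ^ 2 * t * (X - t⁻¹) ≤ 16 * π ^ 2 / w ^ 2 / t := by
    calc 16 * π ^ 2 / w ^ 2 * t * (X - t⁻¹) ≤ 16 * π ^ 2 / w ^ 2 * t * X := by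
          gcongr; linarith [inv_pos.2 ht]
      _ = 16 * π ^ 2 / w ^ 2 / t := by simp only [X]; field_simp
  rw [hsplit₁, hsplit₂]
  calc _ ≤ |∫ M in a..t⁻¹, weight c M * sin (t * √(P + M)) / √(P + M)|
        + (|∫ M in t⁻¹..X, weight c M * sin (t * √(P + M)) / √(P + M)|
          + |oscTail (weight c) (weightDeriv c) t P X|) := by
        refine (abs_add_le _ _).trans ?_
        rw [abs_neg]
        gcongr
        exact (abs_add_le _ _).trans_eq (by rw [abs_neg])
    _ ≤ 16 + (16 * π ^ 2 / w ^ 2 / t + 4 / t * (16 * π ^ 2 / w ^ 2)) := by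
        gcongr
        exacts [hhead.trans hA, hmiddle.trans hB,
          htail.trans (mul_le_mul_of_nonneg_left hX (by positivity))]
    _ = 16 + 80 * π ^ 2 / (t * w ^ 2) := by field_simp; ring

end WeightedTail

section TailBound

variable {c a t P : ℝ}

noncomputable def smallTimeThreshold (c a : ℝ) : ℝ := min (min 1 a⁻¹) (c / 2)

noncomputable def tailBound (c a t : ℝ) : ℝ :=
  if t ≤ smallTimeThreshold c a then 16 + 80 * π ^ 2 / (t * log (c / t) ^ 2)
  else (32 + 32 * π) / t

lemma smallTimeThreshold_pos (hc : 0 < c) (ha : 0 < a) : 0 < smallTimeThreshold c a :=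
  lt_min (lt_min one_pos (inv_pos.2 ha)) (half_pos hc)

lemma smallTimeThreshold_le_one : smallTimeThreshold c a ≤ 1 :=
  (min_le_left _ _).trans (min_le_left _ _)

theorem integrableOn_tailBound (hc : 0 < c) (ha : 0 < a) :
    IntegrableOn (tailBound c a) (Ioc 0 1) := by
  have ht0 := smallTimeThreshold_pos hc ha
  rw [← Ioc_union_Ioc_eq_Ioc ht0.le smallTimeThreshold_le_one]
  refine IntegrableOn.union ?_ ?_
  · have hsmall := (integrableOn_const (C := (16 : ℝ)) measure_Ioc_lt_top.ne).add
      ((integrableOn_inv_mul_log_div_sq ht0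
        ((min_le_right _ _).trans_lt (half_lt_self hc))).const_mul (80 * π ^ 2))
    refine hsmall.congr_fun (fun t ht => ?_) measurableSet_Ioc
    rw [tailBound, if_pos ht.2, div_eq_mul_inv (80 * π ^ 2), Pi.add_apply]
  · have hcont : ContinuousOn (fun t => (32 + 32 * π) / t) (Icc (smallTimeThreshold c a) 1) :=
      continuousOn_const.div continuousOn_id fun t ht => (ht0.trans_le ht.1).ne'
    refine (hcont.integrableOn_Icc.mono_set Ioc_subset_Icc_self).congr_fun (fun t ht => ?_)
      measurableSet_Ioc
    rw [tailBound, if_neg (not_le.2 ht.1)]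

theorem abs_oscTail_weight_le_tailBound (hc : 0 < c) (ha : 0 < a) (hP : 0 ≤ P)
    (ht : t ∈ Ioc 0 1) : |oscTail (weight c) (weightDeriv c) t P a| ≤ tailBound c a t := by
  rw [tailBound]
  split_ifs with hsmall
  · exact abs_oscTail_weight_le_of_small hc ha hP ht.1 ht.2
      (hsmall.trans ((min_le_left _ _).trans (min_le_right _ _)))
      (hsmall.trans_lt ((min_le_right _ _).trans_lt (half_lt_self hc)))
  · exact (abs_oscTail_weight_le hc ha).trans_eq (by rw [abs_of_pos ht.1])

end TailBound

theorem stmt_18 (m δ : ℝ) (hm : 0 < m) (hδ : 0 < δ)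
    (φ : ℝ → ℝ)
    (hφ : ∀ M : ℝ, φ M =
      -(16 * Real.pi ^ 2) / ((Real.log (δ * M / (4 * m ^ 2))) ^ 2 + Real.pi ^ 2)) :
    ∃ C : ℝ → ℝ → ℝ,
      (∀ t : ℝ, t ≠ 0 → ∀ P : ℝ, 0 ≤ P →
        Tendsto
          (fun R : ℝ =>
            -∫ M in Set.Icc (4 * m ^ 2) R,
              φ M * Real.sin (t * Real.sqrt (P + M)) / Real.sqrt (P + M))
          atTop (nhds (C t P))) ∧
      (∃ K : ℝ, 0 < K ∧ ∀ t : ℝ, t ≠ 0 → ∀ P : ℝ, 0 ≤ P → |C t P| ≤ K / |t|) ∧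
      (∃ h : ℝ → ℝ, IntegrableOn h (Set.Ioc (0 : ℝ) 1) ∧
        ∀ t ∈ Set.Ioc (0 : ℝ) 1, ∀ P : ℝ, 0 ≤ P → |C t P| ≤ h t) := by
  set c := δ / (4 * m ^ 2)
  have hc : 0 < c := by positivity
  have ha : 0 < 4 * m ^ 2 := by positivity
  obtain rfl : φ = weight c := funext fun M => by rw [hφ, weight, div_mul_eq_mul_div]
  refine ⟨fun t P => oscTail (weight c) (weightDeriv c) t P (4 * m ^ 2), fun t ht P hP => ?_,
    ⟨32 + 32 * π, by positivity, fun t _ P _ => abs_oscTail_weight_le hc ha⟩,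
    ⟨tailBound c (4 * m ^ 2), integrableOn_tailBound hc ha,
      fun t ht P hP => abs_oscTail_weight_le_tailBound hc ha hP ht⟩⟩
  refine (tendsto_oscTail ht (by positivity)
    (fun M hM => hasDerivAt_weight hc.ne' (ha.trans_le hM).ne') (integrableOn_weightDeriv hc ha)
    (tendsto_weight_atTop hc)).congr' ?_
  filter_upwards [eventually_ge_atTop (4 * m ^ 2)] with R hR
  rw [integral_Icc_eq_integral_Ioc, intervalIntegral.integral_of_le hR]
end
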